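/- Let f ∈ L^1(T) satisfy, for some p > 1, ∑_{|k| ≥ n+1} |f̂(k)|^p = O(1/n^{p-1}) as n → ∞. If the Cesàro means σ_n(x,f) converge uniformly on a subset K of T, then the symmetric partial sums S_n(x,f) converge uniformly on the closure of K. -/

import Mathlib

/-!
By Hölder's inequality and the tail bound, for `n ≤ i` and all `x`,
`‖S_i x - S_n x‖ ^ p ≤ (2 (i - n)) ^ (p - 1) · M / n ^ (p - 1) = M · (2 (i - n) / n) ^ (p - 1)`,
so the partial sums oscillate slowly, uniformly in `x`. The de la Vallée Poussin identity
`d (S_n - g) = (n + d + 1)(σ_{n+d} - g) - (n + 1)(σ_n - g) - ∑_{n < i ≤ n + d} (S_i - S_n)`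
with `d ≈ δ n` then turns uniform convergence of `σ_n` on `K` into uniform convergence of `S_n`
on `K`. The `S_n` are trigonometric polynomials, hence continuous, so being uniformly Cauchy
passes from `K` to its closure.
-/

open MeasureTheory Filter Topology AddCircle

instance fact_two_pi_pos : Fact (0 < 2 * Real.pi) := ⟨Real.two_pi_pos⟩

section UniformCauchy

variable {ι α β : Type*} [UniformSpace β] {F : ι → α → β} {p : Filter ι} {s : Set α}

theorem UniformCauchySeqOn.exists_tendstoUniformlyOn [CompleteSpace β] [p.NeBot]
    (hF : UniformCauchySeqOn F p s) : ∃ f, TendstoUniformlyOn F f p s := by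
  obtain ⟨i⟩ : Nonempty ι := p.nonempty_of_neBot
  exact ⟨fun x => @limUnder _ _ _ ⟨F i x⟩ p (F · x), hF.tendstoUniformlyOn_of_tendsto fun _ hx =>
    tendsto_nhds_limUnder (CompleteSpace.complete (hF.cauchy_map hx))⟩

theorem UniformCauchySeqOn.closure [TopologicalSpace α] (hF : UniformCauchySeqOn F p s)
    (hcont : ∀ i, Continuous (F i)) : UniformCauchySeqOn F p (closure s) := by
  intro u hu
  obtain ⟨V, hV, hVclosed, hVu⟩ := mem_uniformity_isClosed hu
  filter_upwards [hF V hV] with m hm x hx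
  have hclosed : IsClosed {y | (F m.1 y, F m.2 y) ∈ V} :=
    hVclosed.preimage ((hcont m.1).prodMk (hcont m.2))
  exact hVu (closure_minimal hm hclosed hx)

end UniformCauchy

section Cesaro

variable {X E : Type*} [NormedAddCommGroup E]

def SlowlyOscillatesUniformlyOn (S : ℕ → X → E) (K : Set X) : Prop :=
  ∀ ε > 0, ∃ δ > 0, ∀ᶠ n : ℕ in atTop, ∀ i : ℕ, n ≤ i → (i : ℝ) ≤ (1 + δ) * n →
    ∀ x ∈ K, ‖S i x - S n x‖ ≤ ε

variable [NormedSpace ℂ E]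

noncomputable def cesaroMean (s : ℕ → E) (n : ℕ) : E :=
  ((n : ℂ) + 1)⁻¹ • ∑ i ∈ Finset.range (n + 1), s i

theorem add_one_smul_cesaroMean (s : ℕ → E) (n : ℕ) :
    ((n : ℂ) + 1) • cesaroMean s n = ∑ i ∈ Finset.range (n + 1), s i :=
  smul_inv_smul₀ (Nat.cast_add_one_ne_zero n) _

theorem natCast_smul_sub_eq_cesaroMean (s : ℕ → E) (g : E) (n d : ℕ) :
    (d : ℂ) • (s n - g) = ((n + d : ℂ) + 1) • (cesaroMean s (n + d) - g)
      - ((n : ℂ) + 1) • (cesaroMean s n - g)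
      - ∑ i ∈ Finset.range d, (s (n + 1 + i) - s n) := by
  have hsum := add_one_smul_cesaroMean s (n + d)
  rw [show n + d + 1 = n + 1 + d by omega, Finset.sum_range_add,
    ← add_one_smul_cesaroMean s n] at hsum
  push_cast at hsum
  rw [smul_sub, smul_sub, hsum, Finset.sum_sub_distrib, Finset.sum_const, Finset.card_range]
  simp only [smul_sub, ← Nat.cast_smul_eq_nsmul ℂ]
  rw [show ((n : ℂ) + d + 1) • g = ((n : ℂ) + 1) • g + (d : ℂ) • g by rw [← add_smul]; ring_nf]
  abel

theorem norm_sub_le_of_cesaroMean {s : ℕ → E} {g : E} {n d : ℕ} (hd : 0 < d) {a b : ℝ}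
    (hn : ‖cesaroMean s n - g‖ ≤ a) (hnd : ‖cesaroMean s (n + d) - g‖ ≤ a)
    (hosc : ∀ i, n < i → i ≤ n + d → ‖s i - s n‖ ≤ b) :
    ‖s n - g‖ ≤ (2 * n + d + 2) / d * a + b := by
  have hosc_sum : ‖∑ i ∈ Finset.range d, (s (n + 1 + i) - s n)‖ ≤ d * b := by
    refine (norm_sum_le _ _).trans ?_
    simpa using Finset.sum_le_card_nsmul (Finset.range d) _ b fun i hi =>
      hosc (n + 1 + i) (by omega) (by have := Finset.mem_range.mp hi; omega)
  have key : (d : ℝ) * ‖s n - g‖ ≤ (n + d + 1) * a + (n + 1) * a + d * b :=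
    calc (d : ℝ) * ‖s n - g‖ = ‖(d : ℂ) • (s n - g)‖ := by simp [norm_smul]
      _ ≤ ‖((n + d : ℂ) + 1) • (cesaroMean s (n + d) - g)‖
          + ‖((n : ℂ) + 1) • (cesaroMean s n - g)‖
          + ‖∑ i ∈ Finset.range d, (s (n + 1 + i) - s n)‖ := by
        rw [natCast_smul_sub_eq_cesaroMean]
        exact (norm_sub_le _ _).trans (by gcongr; exact norm_sub_le _ _)
      _ ≤ (n + d + 1) * a + (n + 1) * a + d * b := by
        have hnorm (m : ℕ) : ‖(m : ℂ) + 1‖ = m + 1 := by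
          exact_mod_cast Complex.norm_natCast (m + 1)
        rw [norm_smul, norm_smul, ← Nat.cast_add, hnorm, hnorm]
        push_cast
        gcongr
  have hd' : (0 : ℝ) < d := by exact_mod_cast hd
  rw [div_mul_eq_mul_div, div_add' _ _ _ hd'.ne', le_div_iff₀ hd']
  linarith

theorem exists_nat_le_mul_and_div_le {δ : ℝ} (hδ : 0 < δ) {n : ℕ} (hn : 1 ≤ n)
    (hδn : 1 ≤ δ * n) : ∃ d : ℕ, 0 < d ∧ (d : ℝ) ≤ δ * n ∧ (2 * n + d + 2) / d ≤ 1 + 8 / δ := by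
  refine ⟨⌊δ * n⌋₊, Nat.floor_pos.mpr hδn, Nat.floor_le (by positivity), ?_⟩
  have hd : (1 : ℝ) ≤ ⌊δ * n⌋₊ := by exact_mod_cast Nat.floor_pos.mpr hδn
  have hdδ : 4 * n ≤ 8 / δ * ⌊δ * n⌋₊ := by
    rw [div_mul_eq_mul_div, le_div_iff₀ hδ]
    linarith [Nat.lt_floor_add_one (δ * n)]
  have hn' : (1 : ℝ) ≤ n := by exact_mod_cast hn
  rw [div_le_iff₀ (by positivity)]
  linarith

theorem tendstoUniformlyOn_of_cesaroMean_of_slowlyOscillates {S : ℕ → X → E} {g : X → E}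
    {K : Set X} (hσ : TendstoUniformlyOn (fun n x => cesaroMean (S · x) n) g atTop K)
    (hosc : SlowlyOscillatesUniformlyOn S K) : TendstoUniformlyOn S g atTop K := by
  rw [Metric.tendstoUniformlyOn_iff] at hσ ⊢
  intro ε hε
  obtain ⟨δ, hδ, hosc⟩ := hosc (ε / 2) (half_pos hε)
  set C := 1 + 8 / δ
  have hC0 : 0 < C := by positivity
  obtain ⟨N, hN⟩ := eventually_atTop.mp (hσ (ε / (4 * C)) (by positivity))
  have hσle {m : ℕ} (hm : N ≤ m) {x : X} (hx : x ∈ K) :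
      ‖cesaroMean (S · x) m - g x‖ ≤ ε / (4 * C) := by
    rw [← dist_eq_norm']
    exact (hN m hm x hx).le
  filter_upwards [eventually_ge_atTop N, eventually_ge_atTop 1, hosc,
    (tendsto_natCast_atTop_atTop.const_mul_atTop hδ).eventually_ge_atTop 1]
    with n hnN hn1 hoscn hδn x hx
  obtain ⟨d, hd, hdδ, hC⟩ := exists_nat_le_mul_and_div_le hδ hn1 hδn
  have hosc_d : ∀ i, n < i → i ≤ n + d → ‖S i x - S n x‖ ≤ ε / 2 := by
    intro i hni hid
    have : (i : ℝ) ≤ n + d := by exact_mod_cast hid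
    exact hoscn i hni.le (by linarith) x hx
  rw [dist_eq_norm']
  calc ‖S n x - g x‖ ≤ (2 * n + d + 2) / d * (ε / (4 * C)) + ε / 2 :=
        norm_sub_le_of_cesaroMean hd (hσle hnN hx) (hσle (by omega) hx) hosc_d
    _ ≤ C * (ε / (4 * C)) + ε / 2 := by gcongr
    _ < ε := by field_simp; linarith

end Cesaro

theorem card_Icc_sdiff_Icc {n i : ℕ} (h : n ≤ i) :
    (Finset.Icc (-(i : ℤ)) i \ Finset.Icc (-(n : ℤ)) n).card = 2 * (i - n) := by
  rw [Finset.card_sdiff_of_subset (Finset.Icc_subset_Icc (by omega) (by omega)), Int.card_Icc,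
    Int.card_Icc]
  omega

theorem add_one_le_abs_of_mem_Icc_sdiff_Icc {n i : ℕ} {k : ℤ}
    (hk : k ∈ Finset.Icc (-(i : ℤ)) i \ Finset.Icc (-(n : ℤ)) n) : (n : ℤ) + 1 ≤ |k| := by
  simp only [Finset.mem_sdiff, Finset.mem_Icc] at hk
  rcases abs_cases k with ⟨h, _⟩ | ⟨h, _⟩ <;> omega

theorem rpow_sum_Icc_sdiff_Icc_le {a : ℤ → ℝ} (ha : ∀ k, 0 ≤ a k) {p : ℝ} (hp : 1 ≤ p)
    (hs : Summable fun k => a k ^ p) {n i : ℕ} (h : n ≤ i) :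
    (∑ k ∈ Finset.Icc (-(i : ℤ)) i \ Finset.Icc (-(n : ℤ)) n, a k) ^ p
      ≤ (2 * ((i : ℝ) - n)) ^ (p - 1) * ∑' k : {k : ℤ // (n : ℤ) + 1 ≤ |k|}, a k ^ p := by
  set s := Finset.Icc (-(i : ℤ)) i \ Finset.Icc (-(n : ℤ)) n
  have hcard : (s.card : ℝ) = 2 * ((i : ℝ) - n) := by
    rw [card_Icc_sdiff_Icc h]; push_cast [h]; ring
  have htail : ∑ k ∈ s, a k ^ p ≤ ∑' k : {k : ℤ // (n : ℤ) + 1 ≤ |k|}, a k ^ p := by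
    rw [← Finset.sum_subtype_of_mem _ fun k hk => add_one_le_abs_of_mem_Icc_sdiff_Icc hk]
    exact (hs.subtype _).sum_le_tsum _ fun k _ => Real.rpow_nonneg (ha k) p
  calc (∑ k ∈ s, a k) ^ p ≤ (s.card : ℝ) ^ (p - 1) * ∑ k ∈ s, a k ^ p :=
        Real.rpow_sum_le_const_mul_sum_rpow_of_nonneg s hp fun k _ => ha k
    _ ≤ _ := by
        rw [hcard]
        exact mul_le_mul_of_nonneg_left htail (Real.rpow_nonneg (hcard ▸ Nat.cast_nonneg _) _)

theorem exists_pos_mul_rpow_le (M : ℝ) {q η : ℝ} (hq : 0 < q) (hη : 0 < η) :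
    ∃ δ > 0, M * δ ^ q ≤ η := by
  have hlim : Tendsto (fun δ : ℝ => M * δ ^ q) (𝓝[>] 0) (𝓝 0) := by
    have hcont : Continuous fun δ : ℝ => M * δ ^ q :=
      continuous_const.mul (continuous_id.rpow_const fun _ => Or.inr hq.le)
    simpa [Real.zero_rpow hq.ne'] using (hcont.tendsto 0).mono_left nhdsWithin_le_nhds
  obtain ⟨δ, hδε, hδ⟩ := ((hlim.eventually (ge_mem_nhds hη)).and self_mem_nhdsWithin).exists
  exact ⟨δ, hδ, hδε⟩

section Fourier

variable {T : ℝ}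

noncomputable def fourierPartialSum (c : ℤ → ℂ) (n : ℕ) (x : AddCircle T) : ℂ :=
  ∑ k ∈ Finset.Icc (-(n : ℤ)) n, c k • fourier k x

theorem continuous_fourierPartialSum (c : ℤ → ℂ) (n : ℕ) :
    Continuous (fourierPartialSum (T := T) c n) :=
  continuous_finsetSum _ fun k _ => (map_continuous (fourier k)).const_smul (c k)

theorem norm_fourierPartialSum_sub_le (c : ℤ → ℂ) {n i : ℕ} (h : n ≤ i) (x : AddCircle T) :
    ‖fourierPartialSum c i x - fourierPartialSum c n x‖
      ≤ ∑ k ∈ Finset.Icc (-(i : ℤ)) i \ Finset.Icc (-(n : ℤ)) n, ‖c k‖ := by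
  rw [fourierPartialSum, fourierPartialSum,
    ← Finset.sum_sdiff_eq_sub (Finset.Icc_subset_Icc (by omega) (by omega))]
  refine (norm_sum_le _ _).trans (Finset.sum_le_sum fun k _ => ?_)
  simp [Circle.norm_coe]

theorem slowlyOscillatesUniformlyOn_fourierPartialSum {c : ℤ → ℂ} {p : ℝ} (hp : 1 < p)
    (hs : Summable fun k => ‖c k‖ ^ p) {M : ℝ} (hM : 0 ≤ M) {n₀ : ℕ}
    (htail : ∀ n : ℕ, n₀ ≤ n →
      (∑' k : {k : ℤ // (n : ℤ) + 1 ≤ |k|}, ‖c (k : ℤ)‖ ^ p) ≤ M / (n : ℝ) ^ (p - 1))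
    (K : Set (AddCircle T)) : SlowlyOscillatesUniformlyOn (fourierPartialSum c) K := by
  intro ε hε
  obtain ⟨δ, hδ, hδε⟩ := exists_pos_mul_rpow_le M (show 0 < p - 1 by linarith)
    (show 0 < ε ^ p by positivity)
  refine ⟨δ / 2, half_pos hδ, ?_⟩
  filter_upwards [eventually_ge_atTop (max n₀ 1)] with n hn i hni hi x _
  have hn0 : (0 : ℝ) < n := by exact_mod_cast (le_of_max_le_right hn)
  have hratio : 2 * ((i : ℝ) - n) / n ≤ δ := by
    rw [div_le_iff₀ hn0]; linarith
  have hin : (0 : ℝ) ≤ 2 * ((i : ℝ) - n) := by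
    have : (n : ℝ) ≤ i := by exact_mod_cast hni
    linarith
  refine (Real.rpow_le_rpow_iff (norm_nonneg _) hε.le (show (0 : ℝ) < p by linarith)).mp ?_
  calc ‖fourierPartialSum c i x - fourierPartialSum c n x‖ ^ p
      ≤ (∑ k ∈ Finset.Icc (-(i : ℤ)) i \ Finset.Icc (-(n : ℤ)) n, ‖c k‖) ^ p := by
        gcongr; exact norm_fourierPartialSum_sub_le c hni x
    _ ≤ (2 * ((i : ℝ) - n)) ^ (p - 1) * ∑' k : {k : ℤ // (n : ℤ) + 1 ≤ |k|}, ‖c k‖ ^ p :=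
        rpow_sum_Icc_sdiff_Icc_le (fun _ => norm_nonneg _) hp.le hs hni
    _ ≤ (2 * ((i : ℝ) - n)) ^ (p - 1) * (M / (n : ℝ) ^ (p - 1)) := by
        gcongr; exact htail n (le_of_max_le_left hn)
    _ = M * (2 * ((i : ℝ) - n) / n) ^ (p - 1) := by
        rw [Real.div_rpow hin hn0.le]; ring
    _ ≤ M * δ ^ (p - 1) := by gcongr
    _ ≤ ε ^ p := hδε

end Fourier

theorem hardy_tauberian_uniform_convergence_on_closure_general
    (f : AddCircle (2 * Real.pi) → ℂ)
    (p : ℝ) (hp : 1 < p)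
    (hSummable : Summable fun k : ℤ => ‖fourierCoeff f k‖ ^ p)
    (htail : ∃ M : ℝ, 0 < M ∧ ∃ n₀ : ℕ, ∀ n : ℕ, n₀ ≤ n →
        (∑' k : {k : ℤ // (n : ℤ) + 1 ≤ |k|}, ‖fourierCoeff f (k : ℤ)‖ ^ p)
          ≤ M / (n : ℝ) ^ (p - 1))
    (K : Set (AddCircle (2 * Real.pi))) (g : AddCircle (2 * Real.pi) → ℂ)
    (hσ : TendstoUniformlyOn
      (fun (n : ℕ) (x : AddCircle (2 * Real.pi)) =>
        ((n : ℂ) + 1)⁻¹ • ∑ i ∈ Finset.range (n + 1),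
          ∑ k ∈ Finset.Icc (-(i : ℤ)) (i : ℤ), fourierCoeff f k • fourier k x)
      g atTop K) :
    ∃ h : AddCircle (2 * Real.pi) → ℂ,
      TendstoUniformlyOn
        (fun (n : ℕ) (x : AddCircle (2 * Real.pi)) =>
          ∑ k ∈ Finset.Icc (-(n : ℤ)) (n : ℤ), fourierCoeff f k • fourier k x)
        h atTop (closure K) := by
  obtain ⟨M, hM, n₀, htail⟩ := htail
  have hS : TendstoUniformlyOn (fourierPartialSum (fourierCoeff f)) g atTop K :=
    tendstoUniformlyOn_of_cesaroMean_of_slowlyOscillates hσ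
      (slowlyOscillatesUniformlyOn_fourierPartialSum hp hSummable hM.le htail K)
  exact (hS.uniformCauchySeqOn.closure
    (continuous_fourierPartialSum _)).exists_tendstoUniformlyOn

/-- **A generalized Hardy Tauberian theorem for Fourier series** (Remark 4). Let `f ∈ L¹(𝕋)`
satisfy, for some `p > 1`, `∑_{|k| ≥ n+1} |f̂(k)|^p = O(1/n^{p-1})` as `n → ∞`. If the
Cesàro means `σ_n(x,f)` converge uniformly on a subset `K` of `𝕋` (to some function `g`),
then the symmetric partial sums `S_n(x,f)` converge uniformly on the closure of `K`. -/
theorem hardy_tauberian_uniform_convergence_on_closure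
    (f : AddCircle (2 * Real.pi) → ℂ)
    (hf : Integrable f haarAddCircle)
    (p : ℝ) (hp : 1 < p)
    (hSummable : Summable fun k : ℤ => ‖fourierCoeff f k‖ ^ p)
    (htail : ∃ M : ℝ, 0 < M ∧ ∃ n₀ : ℕ, ∀ n : ℕ, n₀ ≤ n →
        (∑' k : {k : ℤ // (n : ℤ) + 1 ≤ |k|}, ‖fourierCoeff f (k : ℤ)‖ ^ p)
          ≤ M / (n : ℝ) ^ (p - 1))
    (K : Set (AddCircle (2 * Real.pi))) (g : AddCircle (2 * Real.pi) → ℂ)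
    (hσ : TendstoUniformlyOn
      (fun (n : ℕ) (x : AddCircle (2 * Real.pi)) =>
        ((n : ℂ) + 1)⁻¹ • ∑ i ∈ Finset.range (n + 1),
          ∑ k ∈ Finset.Icc (-(i : ℤ)) (i : ℤ), fourierCoeff f k • fourier k x)
      g atTop K) :
    ∃ h : AddCircle (2 * Real.pi) → ℂ,
      TendstoUniformlyOn
        (fun (n : ℕ) (x : AddCircle (2 * Real.pi)) =>
          ∑ k ∈ Finset.Icc (-(n : ℤ)) (n : ℤ), fourierCoeff f k • fourier k x)
        h atTop (closure K) :=
  hardy_tauberian_uniform_convergence_on_closure_general f p hp hSummable htail K g hσ
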